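/- Fix n ≥ 1 and let Θ = Θ_k ⋯ Θ_1, where Θ_i : Γ(E_i) → Γ(E_{i+1}) (i = 1, …, k) are contractive multi-analytic operators, E_1 = E, E_{k+1} = E_*. Let C_j (resp. C_j^{(i)}) be the row-isometry operators on cl ran Δ_Θ (resp. cl ran Δ_i, Δ_i := Δ_{Θ_i}) determined by C_j(Δ_Θ f) = Δ_Θ(L_j^E f) (resp. C_j^{(i)}(Δ_i x) = Δ_i(L_j^{E_i} x)), and let Z_k : cl ran Δ_Θ → (cl ran Δ_k) ⊕ ⋯ ⊕ (cl ran Δ_1) be the isometry with Z_k(Δ_Θ f) = Δ_kΘ_{k-1}⋯Θ_1 f ⊕ ⋯ ⊕ Δ_1 f. Then for every j = 1, …, n one has Z_k C_j = diag(C_j^{(k)}, …, C_j^{(1)}) Z_k; explicitly, Z_k(C_j Δ_Θ f) = C_j^{(k)}(Δ_kΘ_{k-1}⋯Θ_1 f) ⊕ ⋯ ⊕ C_j^{(2)}(Δ_2Θ_1 f) ⊕ C_j^{(1)}(Δ_1 f) for all f ∈ Γ(E). -/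

import Mathlib

set_option linter.unusedSectionVars false

noncomputable section
open ContinuousLinearMap
open scoped ENNReal NNReal ComplexInnerProductSpace
section Defect
variable {H K : Type*} [NormedAddCommGroup H] [InnerProductSpace ℂ H] [CompleteSpace H]
  [NormedAddCommGroup K] [InnerProductSpace ℂ K] [CompleteSpace K]

/-- The defect operator `Δ_A := (I - A*A)^{1/2}` of a contraction `A : H → K`. -/
noncomputable def defect (A : H →L[ℂ] K) : H →L[ℂ] H :=
  CFC.sqrt (1 - (ContinuousLinearMap.adjoint A).comp A)

/-- Closure of the range of an operator, as a submodule. -/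
noncomputable def clRan (A : H →L[ℂ] K) : Submodule ℂ K :=
  (LinearMap.range (A : H →ₗ[ℂ] K)).topologicalClosure

theorem defect_mem_clRan (A : H →L[ℂ] K) (x : H) : defect A x ∈ clRan (defect A) :=
  Submodule.le_topologicalClosure _ (LinearMap.mem_range_self (defect A : H →ₗ[ℂ] H) x)

instance clRan_completeSpace (A : H →L[ℂ] K) : CompleteSpace (clRan A) :=
  haveI : IsClosed (clRan A : Set K) := Submodule.isClosed_topologicalClosure _
  IsClosed.completeSpace_coe

/-- `A` is a contraction: a bounded operator of norm at most `1`. -/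
def IsContraction {E F : Type*} [SeminormedAddCommGroup E] [SeminormedAddCommGroup F]
    [NormedSpace ℂ E] [NormedSpace ℂ F] (A : E →L[ℂ] F) : Prop := ‖A‖ ≤ 1
end Defect

section Chain
variable {E : ℕ → Type*} [∀ n, NormedAddCommGroup (E n)] [∀ n, InnerProductSpace ℂ (E n)]
  [∀ n, CompleteSpace (E n)]

/-- Transport along an equality of indices. -/
def castCLM {a b : ℕ} (h : a = b) : E a →L[ℂ] E b := by
  subst h; exact ContinuousLinearMap.id ℂ (E a)

/-- `segProd Θ a m = Θ_{a+m} ∘ ⋯ ∘ Θ_{a+1} : E a → E (a+m)` (in `1`-based notation):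
the composition of `m` successive operators of the chain starting at index `a`. -/
noncomputable def segProd (Θ : ∀ n, E n →L[ℂ] E (n + 1)) (a : ℕ) :
    ∀ m : ℕ, E a →L[ℂ] E (a + m)
  | 0 => ContinuousLinearMap.id ℂ (E a)
  | m + 1 => (Θ (a + m)).comp (segProd Θ a m)

/-- `chainProd Θ a b : E a → E b` is the composition of the operators of the chain
leading from `E a` to `E b` (for `a ≤ b`; junk value `0` otherwise). -/
noncomputable def chainProd (Θ : ∀ n, E n →L[ℂ] E (n + 1)) (a b : ℕ) : E a →L[ℂ] E b :=
  if h : a ≤ b then (castCLM (Nat.add_sub_cancel' h)).comp (segProd Θ a (b - a)) else 0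

/-- The tuple `(Δ_k Θ_{k-1}⋯Θ_1 f, …, Δ_2 Θ_1 f, Δ_1 f)` (component `i : Fin k`
corresponds to the `(i+1)`-st factor, in `1`-based notation) in the Hilbert (ℓ²)
direct sum of the closures of the ranges of the defect operators of the factors. -/
noncomputable def regTuple (Θ : ∀ n, E n →L[ℂ] E (n + 1)) (k : ℕ) (f : E 0) :
    PiLp 2 (fun i : Fin k => clRan (defect (Θ (i : ℕ)))) :=
  WithLp.toLp 2 fun i => ⟨defect (Θ (i : ℕ)) (chainProd Θ 0 (i : ℕ) f), defect_mem_clRan _ _⟩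

/-- `k`-regularity of the factorization `Θ_k ⋯ Θ_1`: the set
`{Δ_k Θ_{k-1}⋯Θ_1 f ⊕ ⋯ ⊕ Δ_2 Θ_1 f ⊕ Δ_1 f : f ∈ E_1}` is dense in the Hilbert
direct sum `(cl ran Δ_k) ⊕ ⋯ ⊕ (cl ran Δ_1)`. -/
def IsRegularFact (Θ : ∀ n, E n →L[ℂ] E (n + 1)) (k : ℕ) : Prop :=
  DenseRange (regTuple Θ k)

end Chain

instance PiLp.instCompleteSpace {ι : Type*} [Fintype ι] (p : ℝ≥0∞) (F : ι → Type*)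
    [∀ i, NormedAddCommGroup (F i)] [∀ i, CompleteSpace (F i)] :
    CompleteSpace (PiLp p F) :=
  inferInstance

section FockDef
/-- Words in the generators `{1, …, n}`: the free monoid on `Fin n`. -/
abbrev Word (n : ℕ) := List (Fin n)

/-- The full Fock space over `ℂⁿ` with coefficients in `E`, realized as
`ℓ²(F_n^+, E)`, the Hilbert space of square-summable `E`-valued families indexed by words. -/
abbrev Fock (n : ℕ) (E : Type u) [NormedAddCommGroup E] [InnerProductSpace ℂ E] : Type u :=
  lp (fun _ : Word n => E) 2

variable {n : ℕ} {E : Type*} [NormedAddCommGroup E] [InnerProductSpace ℂ E]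

/-- The underlying function of `L_i f`: `(L_i f)(α) = f(β)` if `α = iβ`, else `0`. -/
def shiftFun (i : Fin n) (f : Word n → E) : Word n → E
  | [] => 0
  | a :: β => if a = i then f β else 0

theorem shiftFun_cons (i : Fin n) (f : Word n → E) (β : Word n) :
    shiftFun i f (i :: β) = f β := by simp [shiftFun]

theorem shiftFun_eq_zero {i : Fin n} {f : Word n → E} {α : Word n}
    (hα : α ∉ Set.range (fun β : Word n => (i :: β : Word n))) : shiftFun i f α = 0 := by
  match α with
  | [] => rfl
  | a :: β =>
    have : ¬ (a = i) := by rintro rfl; exact hα ⟨β, rfl⟩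
    simp [shiftFun, this]

theorem cons_injective (i : Fin n) :
    Function.Injective (fun β : Word n => (i :: β : Word n)) := fun a b h => by
  simpa using h

theorem shiftFun_memℓp (i : Fin n) (f : Fock n E) : Memℓp (shiftFun i ⇑f) 2 := by
  refine memℓp_gen ?_
  have h0 : ∀ α ∉ Set.range (fun β : Word n => (i :: β : Word n)),
      ‖shiftFun i (⇑f) α‖ ^ (2 : ℝ≥0∞).toReal = 0 := by
    intro α hα
    rw [shiftFun_eq_zero hα]
    simp [Real.zero_rpow]
  refine ((cons_injective i).summable_iff h0).mp ?_
  have h1 : (fun α => ‖shiftFun i (⇑f) α‖ ^ (2 : ℝ≥0∞).toReal) ∘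
      (fun β : Word n => (i :: β : Word n)) = fun β => ‖f β‖ ^ (2 : ℝ≥0∞).toReal := by
    funext β
    simp [Function.comp, shiftFun_cons]
  rw [h1]
  exact (lp.memℓp f).summable (by norm_num)

theorem shiftFun_norm (i : Fin n) (f : Fock n E) :
    ‖(⟨shiftFun i ⇑f, shiftFun_memℓp i f⟩ : Fock n E)‖ = ‖f‖ := by
  have hp : 0 < (2 : ℝ≥0∞).toReal := by norm_num
  refine Real.rpow_left_injOn (by norm_num : (2 : ℝ≥0∞).toReal ≠ 0)
    (norm_nonneg _) (norm_nonneg _) ?_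
  simp only []
  rw [lp.norm_rpow_eq_tsum hp, lp.norm_rpow_eq_tsum hp]
  have h0 : (Function.support fun α => ‖shiftFun i (⇑f) α‖ ^ (2 : ℝ≥0∞).toReal) ⊆
      Set.range (fun β : Word n => (i :: β : Word n)) := by
    intro α hα
    simp only [Function.mem_support] at hα
    by_contra hr
    exact hα (by rw [shiftFun_eq_zero hr]; simp [Real.zero_rpow])
  rw [← (cons_injective i).tsum_eq h0]
  congr 1
  funext β
  simp [shiftFun_cons]

/-- The left creation operator `L_i` on the Fock space, as a linear map. -/
noncomputable def creationL (i : Fin n) : Fock n E →ₗ[ℂ] Fock n E where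
  toFun f := ⟨shiftFun i ⇑f, shiftFun_memℓp i f⟩
  map_add' f g := by
    apply lp.ext
    funext α
    show shiftFun i (⇑(f + g)) α = shiftFun i ⇑f α + shiftFun i ⇑g α
    match α with
    | [] => simp [shiftFun, lp.coeFn_add]
    | a :: β =>
      by_cases h : a = i <;> simp [shiftFun, h, lp.coeFn_add]
  map_smul' c f := by
    apply lp.ext
    funext α
    match α with
    | [] => simp [shiftFun, lp.coeFn_smul]
    | a :: β =>
      by_cases h : a = i <;> simp [shiftFun, h, lp.coeFn_smul]

/-- The left creation operator `L_i = L_i^E ∈ B(Γ(E))`, defined by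
`(L_i f)(α) = f(β)` if `α = iβ` for some word `β`, and `(L_i f)(α) = 0` otherwise. -/
noncomputable def creation (i : Fin n) : Fock n E →L[ℂ] Fock n E :=
  (creationL i).mkContinuous 1 (fun f => by
    rw [one_mul]
    exact le_of_eq (shiftFun_norm i f))


/-- The `E`-valued family supported at the empty word with value `v`. -/
def constFun (n : ℕ) (v : E) : Word n → E := fun α => if α = [] then v else 0

theorem constFun_memℓp (v : E) : Memℓp (constFun n v) 2 := by
  refine (memℓp_zero ?_).of_exponent_ge (by simp)
  refine (Set.finite_singleton ([] : Word n)).subset ?_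
  intro α hα
  simp only [Set.mem_setOf_eq, constFun] at hα
  by_contra h
  simp only [Set.mem_singleton_iff] at h
  exact hα (if_neg h)

/-- The canonical embedding of `E` into `Γ(E)` (families supported at the empty word). -/
def fockConst (n : ℕ) (v : E) : Fock n E := ⟨constFun n v, constFun_memℓp v⟩

theorem fockConst_norm_le (f : Fock n E) :
    ‖(⟨constFun n (f []), constFun_memℓp _⟩ : Fock n E)‖ ≤ ‖f‖ := by
  have hp : 0 < (2 : ℝ≥0∞).toReal := by norm_num
  rw [← Real.rpow_le_rpow_iff (norm_nonneg _) (norm_nonneg _) hp]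
  rw [lp.norm_rpow_eq_tsum hp]
  have h1 : (∑' α : Word n, ‖constFun n (f []) α‖ ^ (2 : ℝ≥0∞).toReal) =
      ‖f []‖ ^ (2 : ℝ≥0∞).toReal := by
    refine tsum_eq_single ([] : Word n) ?_
    intro b' hb'
    simp [constFun, if_neg hb', Real.zero_rpow hp.ne']
  rw [h1]
  exact Real.rpow_le_rpow (norm_nonneg _) (lp.norm_apply_le_norm two_ne_zero f []) hp.le

/-- `P_∅`, the orthogonal projection of `Γ(E)` onto the subspace of families supported
at the empty word, as a linear map. -/
noncomputable def projEmptyL : Fock n E →ₗ[ℂ] Fock n E where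
  toFun f := ⟨constFun n (f []), constFun_memℓp _⟩
  map_add' f g := by
    apply lp.ext; funext α
    show constFun n ((⇑(f + g)) []) α = constFun n (f []) α + constFun n (g []) α
    by_cases h : α = [] <;> simp [constFun, h, lp.coeFn_add]
  map_smul' c f := by
    apply lp.ext; funext α
    by_cases h : α = [] <;> simp [constFun, h, lp.coeFn_smul]

/-- `P_∅ = P_∅^E`, the orthogonal projection of `Γ(E)` onto the subspace of families
supported at the empty word (identified with `E`). -/
noncomputable def projEmpty : Fock n E →L[ℂ] Fock n E :=
  projEmptyL.mkContinuous 1 (fun f => by rw [one_mul]; exact fockConst_norm_le f)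

end FockDef

/-! Each factor `Θ_t` intertwines the creation operators, hence so does every partial product
`Θ_{i-1}⋯Θ_1`; therefore the `i`-th component of `Z_k (Δ_Θ (L_j f))` is
`Δ_i L_j Θ_{i-1}⋯Θ_1 f = C_j^{(i)} (Δ_i Θ_{i-1}⋯Θ_1 f)`. -/

section Intertwining
variable {E : ℕ → Type*} [∀ m, NormedAddCommGroup (E m)] [∀ m, InnerProductSpace ℂ (E m)]
  [∀ m, CompleteSpace (E m)]

theorem castCLM_comp_eq {a b : ℕ} (h : a = b) (L : ∀ m, E m →L[ℂ] E m) :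
    (castCLM h).comp (L a) = (L b).comp (castCLM h) := by
  subst h; rfl

theorem segProd_comp_eq (Θ : ∀ m, E m →L[ℂ] E (m + 1)) (L : ∀ m, E m →L[ℂ] E m) (a m : ℕ)
    (hΘ : ∀ t < m, (Θ (a + t)).comp (L (a + t)) = (L (a + t + 1)).comp (Θ (a + t))) :
    (segProd Θ a m).comp (L a) = (L (a + m)).comp (segProd Θ a m) := by
  induction m with
  | zero => rfl
  | succ m ih =>
    rw [segProd, comp_assoc, ih fun t ht => hΘ t (ht.trans m.lt_succ_self), ← comp_assoc,
      hΘ m m.lt_succ_self, comp_assoc]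
    rfl

/-- For `b < a` both sides vanish, since `chainProd Θ a b = 0`. -/
theorem chainProd_comp_eq (Θ : ∀ m, E m →L[ℂ] E (m + 1)) (L : ∀ m, E m →L[ℂ] E m) (a b : ℕ)
    (hΘ : ∀ t, a ≤ t → t < b → (Θ t).comp (L t) = (L (t + 1)).comp (Θ t)) :
    (chainProd Θ a b).comp (L a) = (L b).comp (chainProd Θ a b) := by
  unfold chainProd
  split_ifs with hab
  · rw [comp_assoc, segProd_comp_eq Θ L a (b - a) fun t ht => hΘ (a + t) (by omega) (by omega),
      ← comp_assoc, castCLM_comp_eq, comp_assoc]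
  · simp

end Intertwining

theorem Zk_intertwines_rowIsometries_general {n : ℕ} {Es : ℕ → Type*}
    [∀ m, NormedAddCommGroup (Es m)] [∀ m, InnerProductSpace ℂ (Es m)]
    [∀ m, CompleteSpace (Es m)]
    (k : ℕ)
    (Θ : ∀ m, Fock n (Es m) →L[ℂ] Fock n (Es (m + 1)))
    (hΘma : ∀ i < k, ∀ j : Fin n, (Θ i).comp (creation j) = (creation j).comp (Θ i))
    (C : Fin n → (clRan (defect (chainProd Θ 0 k)) →L[ℂ] clRan (defect (chainProd Θ 0 k))))
    (hC : ∀ (j : Fin n) (f : Fock n (Es 0)),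
      C j ⟨defect (chainProd Θ 0 k) f, defect_mem_clRan _ _⟩ =
        ⟨defect (chainProd Θ 0 k) (creation j f), defect_mem_clRan _ _⟩)
    (Cfac : ∀ m, Fin n → (clRan (defect (Θ m)) →L[ℂ] clRan (defect (Θ m))))
    (hCfac : ∀ m < k, ∀ (j : Fin n) (x : Fock n (Es m)),
      Cfac m j ⟨defect (Θ m) x, defect_mem_clRan _ _⟩ =
        ⟨defect (Θ m) (creation j x), defect_mem_clRan _ _⟩)
    (Z : clRan (defect (chainProd Θ 0 k)) →ₗᵢ[ℂ]
        PiLp 2 (fun i : Fin k => clRan (defect (Θ (i : ℕ)))))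
    (hZ : ∀ f : Fock n (Es 0),
      Z ⟨defect (chainProd Θ 0 k) f, defect_mem_clRan _ _⟩ = regTuple Θ k f) :
    ∀ (j : Fin n) (f : Fock n (Es 0)),
      Z (C j ⟨defect (chainProd Θ 0 k) f, defect_mem_clRan _ _⟩) =
        fun i : Fin k => Cfac (i : ℕ) j
          ⟨defect (Θ (i : ℕ)) (chainProd Θ 0 (i : ℕ) f), defect_mem_clRan _ _⟩ := by
  intro j f
  rw [hC j f, hZ (creation j f)]
  funext i
  have hchain : chainProd Θ 0 i (creation j f) = creation j (chainProd Θ 0 i f) :=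
    congrArg (· f) <| chainProd_comp_eq Θ (fun _ => creation j) 0 i
      fun t _ ht => hΘma t (ht.trans i.2) j
  rw [hCfac i i.2 j, ← hchain]
  rfl

/-- For a factorization `Θ = Θ_k ⋯ Θ_1` into contractive multi-analytic
operators, the isometry `Z_k` intertwines the row isometry `C` of `Θ` with the diagonal of
the row isometries `C^{(i)}` of the factors:
`Z_k (C_j Δ_Θ f) = C_j^{(k)}(Δ_k Θ_{k-1}⋯Θ_1 f) ⊕ ⋯ ⊕ C_j^{(1)}(Δ_1 f)`. -/
theorem Zk_intertwines_rowIsometries {n : ℕ} (hn : 1 ≤ n) {Es : ℕ → Type*}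
    [∀ m, NormedAddCommGroup (Es m)] [∀ m, InnerProductSpace ℂ (Es m)]
    [∀ m, CompleteSpace (Es m)]
    (k : ℕ) (hk : 1 ≤ k)
    (Θ : ∀ m, Fock n (Es m) →L[ℂ] Fock n (Es (m + 1)))
    (hΘc : ∀ i < k, IsContraction (Θ i))
    (hΘma : ∀ i < k, ∀ j : Fin n, (Θ i).comp (creation j) = (creation j).comp (Θ i))
    (C : Fin n → (clRan (defect (chainProd Θ 0 k)) →L[ℂ] clRan (defect (chainProd Θ 0 k))))
    (hC : ∀ (j : Fin n) (f : Fock n (Es 0)),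
      C j ⟨defect (chainProd Θ 0 k) f, defect_mem_clRan _ _⟩ =
        ⟨defect (chainProd Θ 0 k) (creation j f), defect_mem_clRan _ _⟩)
    (Cfac : ∀ m, Fin n → (clRan (defect (Θ m)) →L[ℂ] clRan (defect (Θ m))))
    (hCfac : ∀ m < k, ∀ (j : Fin n) (x : Fock n (Es m)),
      Cfac m j ⟨defect (Θ m) x, defect_mem_clRan _ _⟩ =
        ⟨defect (Θ m) (creation j x), defect_mem_clRan _ _⟩)
    (Z : clRan (defect (chainProd Θ 0 k)) →ₗᵢ[ℂ]
        PiLp 2 (fun i : Fin k => clRan (defect (Θ (i : ℕ)))))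
    (hZ : ∀ f : Fock n (Es 0),
      Z ⟨defect (chainProd Θ 0 k) f, defect_mem_clRan _ _⟩ = regTuple Θ k f) :
    ∀ (j : Fin n) (f : Fock n (Es 0)),
      Z (C j ⟨defect (chainProd Θ 0 k) f, defect_mem_clRan _ _⟩) =
        fun i : Fin k => Cfac (i : ℕ) j
          ⟨defect (Θ (i : ℕ)) (chainProd Θ 0 (i : ℕ) f), defect_mem_clRan _ _⟩ :=
  Zk_intertwines_rowIsometries_general k Θ hΘma C hC Cfac hCfac Z hZ

end
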